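/- arXiv:math/0505669 — 2 statements merged into one kernel-verified Lean document; each statement's English description precedes it below -/
import Mathlib

section
/- Let {i,j,k} = {1,2,3} and let f : m → m be a linear map with f = 0 on mᵢ, f(mⱼ ⊕ m_k) ⊆ mⱼ ⊕ m_k, and f ∘ f = −id on mⱼ ⊕ m_k. Assume there exists X ∈ m with [(fX)ⱼ, (f²X)_k] ≠ 0. Then for positive reals a₁, a₂, a₃ the Killing f-condition '(1/2)[X, fX]_m + U(X, fX) − f(U(X, X)) = 0 for all X ∈ m' holds if and only if aⱼ = a_k = (3/4)·aᵢ, and moreover [Z, fZ]_m = 0 for all Z ∈ mⱼ ⊕ m_k, and [Y, fZ] + f([Y,Z]) = 0 for all Y ∈ mᵢ and Z ∈ mⱼ ⊕ m_k. -/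
open LieAlgebra

/-- The setting of the paper: a finite-dimensional real Lie algebra `g` with negative
definite Killing form, decomposed as a direct sum of subspaces `g = h ⊕ m₁ ⊕ m₂ ⊕ m₃`
(here indexed by `Fin 3`, so `m 0 = m₁` etc.), where `h` is a Lie subalgebra, the `mᵢ`
are pairwise `B`-orthogonal, `0 ≠ [mᵢ, mᵢ₊₁] ⊆ mᵢ₊₂` (mod 3) and `[mᵢ, mᵢ] ⊆ h`.
The projections onto `h` (resp. `mᵢ`) along the decomposition are `ph` (resp. `p i`). -/
structure ThreeModuleSetting (g : Type*) [LieRing g] [LieAlgebra ℝ g]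
    [FiniteDimensional ℝ g] where
  hsub : Submodule ℝ g
  m : Fin 3 → Submodule ℝ g
  ph : g →ₗ[ℝ] g
  p : Fin 3 → (g →ₗ[ℝ] g)
  killing_neg : ∀ X : g, X ≠ 0 → killingForm ℝ g X X < 0
  hsub_lie : ∀ X ∈ hsub, ∀ Y ∈ hsub, ⁅X, Y⁆ ∈ hsub
  ph_mem : ∀ X : g, ph X ∈ hsub
  p_mem : ∀ (i : Fin 3) (X : g), p i X ∈ m i
  sum_eq : ∀ X : g, ph X + p 0 X + p 1 X + p 2 X = X
  proj_spec : ∀ Yh ∈ hsub, ∀ Y0 ∈ m 0, ∀ Y1 ∈ m 1, ∀ Y2 ∈ m 2,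
      ph (Yh + Y0 + Y1 + Y2) = Yh ∧ p 0 (Yh + Y0 + Y1 + Y2) = Y0 ∧
      p 1 (Yh + Y0 + Y1 + Y2) = Y1 ∧ p 2 (Yh + Y0 + Y1 + Y2) = Y2
  orth : ∀ i j : Fin 3, i ≠ j → ∀ X ∈ m i, ∀ Y ∈ m j, killingForm ℝ g X Y = 0
  bracket_cyc : ∀ i : Fin 3, ∀ X ∈ m i, ∀ Y ∈ m (i + 1), ⁅X, Y⁆ ∈ m (i + 2)
  bracket_ne : ∀ i : Fin 3, ∃ X ∈ m i, ∃ Y ∈ m (i + 1), ⁅X, Y⁆ ≠ 0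
  bracket_h : ∀ i : Fin 3, ∀ X ∈ m i, ∀ Y ∈ m i, ⁅X, Y⁆ ∈ hsub

namespace ThreeModuleSetting

variable {g : Type*} [LieRing g] [LieAlgebra ℝ g] [FiniteDimensional ℝ g]
  (S : ThreeModuleSetting g)

/-- The reductive complement `m = m₁ ⊕ m₂ ⊕ m₃`. -/
def msum : Submodule ℝ g := S.m 0 ⊔ S.m 1 ⊔ S.m 2

/-- The projection of `X ∈ g` onto `m` along `h`. -/
def projm (X : g) : g := S.p 0 X + S.p 1 X + S.p 2 X

/-- The inner product `g_a` on `m` determined by the characteristic numbers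
`a = (a₁, a₂, a₃)`, namely `g_a(X,Y) = a₁ g₀(X₁,Y₁) + a₂ g₀(X₂,Y₂) + a₃ g₀(X₃,Y₃)`
where `g₀ = -B`. -/
noncomputable def ga (a : Fin 3 → ℝ) (X Y : g) : ℝ :=
  a 0 * (-(killingForm ℝ g (S.p 0 X) (S.p 0 Y))) +
  a 1 * (-(killingForm ℝ g (S.p 1 X) (S.p 1 Y))) +
  a 2 * (-(killingForm ℝ g (S.p 2 X) (S.p 2 Y)))

/-- The symmetric bilinear map `U : m × m → m`,
`U(X,Y) = ((a₃−a₂)/(2a₁))([X₂,Y₃]+[Y₂,X₃]) + ((a₃−a₁)/(2a₂))([X₁,Y₃]+[Y₁,X₃])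
        + ((a₂−a₁)/(2a₃))([X₁,Y₂]+[Y₁,X₂])`. -/
noncomputable def U (a : Fin 3 → ℝ) (X Y : g) : g :=
  ((a 2 - a 1) / (2 * a 0)) • (⁅S.p 1 X, S.p 2 Y⁆ + ⁅S.p 1 Y, S.p 2 X⁆) +
  ((a 2 - a 0) / (2 * a 1)) • (⁅S.p 0 X, S.p 2 Y⁆ + ⁅S.p 0 Y, S.p 2 X⁆) +
  ((a 1 - a 0) / (2 * a 2)) • (⁅S.p 0 X, S.p 1 Y⁆ + ⁅S.p 0 Y, S.p 1 X⁆)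

lemma memh {X : g} (h : X ∈ S.hsub) :
    S.ph X = X ∧ S.p 0 X = 0 ∧ S.p 1 X = 0 ∧ S.p 2 X = 0 := by
  have := S.proj_spec X h 0 (zero_mem _) 0 (zero_mem _) 0 (zero_mem _)
  simpa using this

lemma mem0 {X : g} (h : X ∈ S.m 0) :
    S.ph X = 0 ∧ S.p 0 X = X ∧ S.p 1 X = 0 ∧ S.p 2 X = 0 := by
  have := S.proj_spec 0 (zero_mem _) X h 0 (zero_mem _) 0 (zero_mem _)
  simpa using this

lemma mem1 {X : g} (h : X ∈ S.m 1) :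
    S.ph X = 0 ∧ S.p 0 X = 0 ∧ S.p 1 X = X ∧ S.p 2 X = 0 := by
  have := S.proj_spec 0 (zero_mem _) 0 (zero_mem _) X h 0 (zero_mem _)
  simpa using this

lemma mem2 {X : g} (h : X ∈ S.m 2) :
    S.ph X = 0 ∧ S.p 0 X = 0 ∧ S.p 1 X = 0 ∧ S.p 2 X = X := by
  have := S.proj_spec 0 (zero_mem _) 0 (zero_mem _) 0 (zero_mem _) X h
  simpa using this

lemma p_same {t : Fin 3} {X : g} (h : X ∈ S.m t) : S.p t X = X := by
  fin_cases t
  · exact (S.mem0 h).2.1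
  · exact (S.mem1 h).2.2.1
  · exact (S.mem2 h).2.2.2

lemma p_other {t s : Fin 3} {X : g} (h : X ∈ S.m t) (hst : s ≠ t) : S.p s X = 0 := by
  fin_cases t <;> fin_cases s <;> simp_all <;>
    first
      | exact (S.mem0 h).2.2.1
      | exact (S.mem0 h).2.2.2
      | exact (S.mem1 h).2.1
      | exact (S.mem1 h).2.2.2
      | exact (S.mem2 h).2.1
      | exact (S.mem2 h).2.2.1

lemma projm_of_mem {t : Fin 3} {X : g} (h : X ∈ S.m t) : S.projm X = X := by
  fin_cases t
  · obtain ⟨-, h0, h1, h2⟩ := S.mem0 h; simp [ThreeModuleSetting.projm, h0, h1, h2]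
  · obtain ⟨-, h0, h1, h2⟩ := S.mem1 h; simp [ThreeModuleSetting.projm, h0, h1, h2]
  · obtain ⟨-, h0, h1, h2⟩ := S.mem2 h; simp [ThreeModuleSetting.projm, h0, h1, h2]

lemma projm_of_h {X : g} (h : X ∈ S.hsub) : S.projm X = 0 := by
  simp [ThreeModuleSetting.projm, (S.memh h).2.1, (S.memh h).2.2.1, (S.memh h).2.2.2]

lemma projm_add (X Y : g) : S.projm (X + Y) = S.projm X + S.projm Y := by
  simp [ThreeModuleSetting.projm, map_add]; abel

lemma bracket_mem {p q r : Fin 3} (hpq : p ≠ q) (hqr : q ≠ r) (hpr : p ≠ r)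
    {X Y : g} (hX : X ∈ S.m p) (hY : Y ∈ S.m q) : ⁅X, Y⁆ ∈ S.m r := by
  have hall : ∀ p q r : Fin 3, p ≠ q → q ≠ r → p ≠ r →
      (q = p + 1 ∧ r = p + 2) ∨ (p = q + 1 ∧ r = q + 2) := by decide
  have h := hall p q r hpq hqr hpr
  rcases h with ⟨h1, h2⟩ | ⟨h1, h2⟩
  · subst h2; exact S.bracket_cyc p X hX Y (h1 ▸ hY)
  · have : ⁅Y, X⁆ ∈ S.m r := h2 ▸ S.bracket_cyc q Y hY X (h1 ▸ hX)
    rw [← lie_skew]; exact neg_mem this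

lemma m_le_msum (t : Fin 3) : S.m t ≤ S.msum := by
  fin_cases t
  · exact le_sup_of_le_left le_sup_left
  · exact le_sup_of_le_left le_sup_right
  · exact le_sup_right

lemma sup_decomp {j k : Fin 3} (hjk : j ≠ k) {Z : g} (hZ : Z ∈ S.m j ⊔ S.m k) :
    S.p j Z + S.p k Z = Z ∧ ∀ i : Fin 3, i ≠ j → i ≠ k → S.p i Z = 0 := by
  obtain ⟨A, hA, B, hB, rfl⟩ := Submodule.mem_sup.1 hZ
  constructor
  · rw [map_add, map_add, S.p_same hA, S.p_other hA hjk.symm, S.p_other hB hjk,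
      S.p_same hB]
    abel
  · intro i hij hik
    rw [map_add, S.p_other hA hij, S.p_other hB hik, add_zero]

lemma msum_decomp {X : g} (hX : X ∈ S.msum) :
    S.p 0 X + S.p 1 X + S.p 2 X = X := by
  obtain ⟨C, hC, Z2, hZ2, rfl⟩ := Submodule.mem_sup.1 hX
  obtain ⟨Z0, hZ0, Z1, hZ1, rfl⟩ := Submodule.mem_sup.1 hC
  simp only [map_add, S.p_same hZ0, S.p_same hZ1, S.p_same hZ2,
    S.p_other hZ0 (by decide : (1:Fin 3) ≠ 0), S.p_other hZ0 (by decide : (2:Fin 3) ≠ 0),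
    S.p_other hZ1 (by decide : (0:Fin 3) ≠ 1), S.p_other hZ1 (by decide : (2:Fin 3) ≠ 1),
    S.p_other hZ2 (by decide : (0:Fin 3) ≠ 2), S.p_other hZ2 (by decide : (1:Fin 3) ≠ 2)]
  abel

lemma perm_sum {i j k : Fin 3} (hij : i ≠ j) (hjk : j ≠ k) (hik : i ≠ k)
    (x : Fin 3 → g) : x i + x j + x k = x 0 + x 1 + x 2 := by
  have hcases : ∀ t : Fin 3, t = 0 ∨ t = 1 ∨ t = 2 := by decide
  rcases hcases i with rfl | rfl | rfl <;> rcases hcases j with rfl | rfl | rfl <;>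
      rcases hcases k with rfl | rfl | rfl <;>
    first
      | exact absurd rfl hij
      | exact absurd rfl hjk
      | exact absurd rfl hik
      | abel

lemma msum_decomp' {i j k : Fin 3} (hij : i ≠ j) (hjk : j ≠ k) (hik : i ≠ k)
    {X : g} (hX : X ∈ S.msum) : S.p i X + S.p j X + S.p k X = X := by
  rw [perm_sum hij hjk hik (fun t => S.p t X), S.msum_decomp hX]

lemma swap_term (c : ℝ) (u v w x : g) :
    c • (⁅u, v⁆ + ⁅w, x⁆) = (-c) • (⁅x, w⁆ + ⁅v, u⁆) := by
  rw [← lie_skew x w, ← lie_skew v u]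
  module

lemma U_formula {i j k : Fin 3} (hij : i ≠ j) (hjk : j ≠ k) (hik : i ≠ k)
    (a : Fin 3 → ℝ) (X Y : g) :
    S.U a X Y
      = ((a k - a j) / (2 * a i)) • (⁅S.p j X, S.p k Y⁆ + ⁅S.p j Y, S.p k X⁆)
      + ((a k - a i) / (2 * a j)) • (⁅S.p i X, S.p k Y⁆ + ⁅S.p i Y, S.p k X⁆)
      + ((a j - a i) / (2 * a k)) • (⁅S.p i X, S.p j Y⁆ + ⁅S.p i Y, S.p j X⁆) := by
  have sw21 : ∀ A B : g, ⁅S.p 2 A, S.p 1 B⁆ = -⁅S.p 1 B, S.p 2 A⁆ :=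
    fun A B => (lie_skew _ _).symm
  have sw20 : ∀ A B : g, ⁅S.p 2 A, S.p 0 B⁆ = -⁅S.p 0 B, S.p 2 A⁆ :=
    fun A B => (lie_skew _ _).symm
  have sw10 : ∀ A B : g, ⁅S.p 1 A, S.p 0 B⁆ = -⁅S.p 0 B, S.p 1 A⁆ :=
    fun A B => (lie_skew _ _).symm
  have hcases : ∀ t : Fin 3, t = 0 ∨ t = 1 ∨ t = 2 := by decide
  rcases hcases i with rfl | rfl | rfl <;> rcases hcases j with rfl | rfl | rfl <;>
      rcases hcases k with rfl | rfl | rfl <;>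
    first
      | exact absurd rfl hij
      | exact absurd rfl hjk
      | exact absurd rfl hik
      | (simp only [ThreeModuleSetting.U, sw21, sw20, sw10]; try module)

lemma lie_neg_swap (u v : g) : ⁅u, -v⁆ = ⁅v, u⁆ := by
  rw [lie_neg]; exact lie_skew v u

lemma projm_bracket {i j k : Fin 3} (hij : i ≠ j) (hjk : j ≠ k) (hik : i ≠ k)
    (f : g →ₗ[ℝ] g) (hf_inv : ∀ X ∈ S.m j ⊔ S.m k, f X ∈ S.m j ⊔ S.m k)
    {Zj Zk : g} (hZj : Zj ∈ S.m j) (hZk : Zk ∈ S.m k) :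
    S.projm ⁅Zj + Zk, f (Zj + Zk)⁆
      = ⁅Zj, S.p k (f (Zj + Zk))⁆ + ⁅Zk, S.p j (f (Zj + Zk))⁆ := by
  obtain ⟨hWsum, -⟩ := S.sup_decomp hjk (hf_inv _
    (add_mem (Submodule.mem_sup_left hZj) (Submodule.mem_sup_right hZk)))
  have hWj := S.p_mem j (f (Zj + Zk))
  have hWk := S.p_mem k (f (Zj + Zk))
  have expand : ⁅Zj + Zk, f (Zj + Zk)⁆
      = ⁅Zj, S.p j (f (Zj + Zk))⁆ + ⁅Zj, S.p k (f (Zj + Zk))⁆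
        + ⁅Zk, S.p j (f (Zj + Zk))⁆ + ⁅Zk, S.p k (f (Zj + Zk))⁆ := by
    conv_lhs => rw [← hWsum]
    simp only [lie_add, add_lie]
    abel
  rw [expand, S.projm_add, S.projm_add, S.projm_add,
    S.projm_of_h (S.bracket_h j Zj hZj _ hWj),
    S.projm_of_h (S.bracket_h k Zk hZk _ hWk),
    S.projm_of_mem (S.bracket_mem hjk hik.symm hij.symm hZj hWk),
    S.projm_of_mem (S.bracket_mem hjk.symm hij.symm hik.symm hZk hWj)]
  abel

lemma C_formula {i j k : Fin 3} (hij : i ≠ j) (hjk : j ≠ k) (hik : i ≠ k)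
    (f : g →ₗ[ℝ] g)
    (hf_zero : ∀ X ∈ S.m i, f X = 0)
    (hf_inv : ∀ X ∈ S.m j ⊔ S.m k, f X ∈ S.m j ⊔ S.m k)
    (a : Fin 3 → ℝ)
    {Y Zj Zk : g} (hY : Y ∈ S.m i) (hZj : Zj ∈ S.m j) (hZk : Zk ∈ S.m k) :
    (1 / 2 : ℝ) • S.projm ⁅Y + Zj + Zk, f (Y + Zj + Zk)⁆
        + S.U a (Y + Zj + Zk) (f (Y + Zj + Zk)) - f (S.U a (Y + Zj + Zk) (Y + Zj + Zk))
      = (1 / 2 : ℝ) • (⁅Zj, S.p k (f (Zj + Zk))⁆ + ⁅Zk, S.p j (f (Zj + Zk))⁆)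
        + ((a k - a j) / (2 * a i)) •
            (⁅Zj, S.p k (f (Zj + Zk))⁆ - ⁅Zk, S.p j (f (Zj + Zk))⁆)
        + ((1 / 2 : ℝ) + (a k - a i) / (2 * a j)) • ⁅Y, S.p k (f (Zj + Zk))⁆
        + ((1 / 2 : ℝ) + (a j - a i) / (2 * a k)) • ⁅Y, S.p j (f (Zj + Zk))⁆
        - (2 * ((a k - a i) / (2 * a j))) • f ⁅Y, Zk⁆
        - (2 * ((a j - a i) / (2 * a k))) • f ⁅Y, Zj⁆ := by
  have hZsup : Zj + Zk ∈ S.m j ⊔ S.m k :=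
    add_mem (Submodule.mem_sup_left hZj) (Submodule.mem_sup_right hZk)
  obtain ⟨hWsum, hWzero⟩ := S.sup_decomp hjk (hf_inv _ hZsup)
  have hWj := S.p_mem j (f (Zj + Zk))
  have hWk := S.p_mem k (f (Zj + Zk))
  have hWi : S.p i (f (Zj + Zk)) = 0 := hWzero i hij hik
  have hfX : f (Y + Zj + Zk) = f (Zj + Zk) := by
    rw [map_add, map_add, hf_zero Y hY, map_add, zero_add]
  have hpiX : S.p i (Y + Zj + Zk) = Y := by
    rw [map_add, map_add, S.p_same hY, S.p_other hZj hij, S.p_other hZk hik,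
      add_zero, add_zero]
  have hpjX : S.p j (Y + Zj + Zk) = Zj := by
    rw [map_add, map_add, S.p_other hY hij.symm, S.p_same hZj, S.p_other hZk hjk,
      zero_add, add_zero]
  have hpkX : S.p k (Y + Zj + Zk) = Zk := by
    rw [map_add, map_add, S.p_other hY hik.symm, S.p_other hZj hjk.symm, S.p_same hZk,
      zero_add, zero_add]
  have hbr : S.projm ⁅Y + Zj + Zk, f (Zj + Zk)⁆
      = ⁅Y, S.p j (f (Zj + Zk))⁆ + ⁅Y, S.p k (f (Zj + Zk))⁆
        + (⁅Zj, S.p k (f (Zj + Zk))⁆ + ⁅Zk, S.p j (f (Zj + Zk))⁆) := by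
    have expand : ⁅Y + Zj + Zk, f (Zj + Zk)⁆
        = ⁅Y, S.p j (f (Zj + Zk))⁆ + ⁅Y, S.p k (f (Zj + Zk))⁆
          + ⁅Zj, S.p j (f (Zj + Zk))⁆ + ⁅Zj, S.p k (f (Zj + Zk))⁆
          + ⁅Zk, S.p j (f (Zj + Zk))⁆ + ⁅Zk, S.p k (f (Zj + Zk))⁆ := by
      conv_lhs => rw [← hWsum]
      simp only [lie_add, add_lie]
      abel
    rw [expand, S.projm_add, S.projm_add, S.projm_add, S.projm_add, S.projm_add,
      S.projm_of_mem (S.bracket_mem hij hjk hik hY hWj),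
      S.projm_of_mem (S.bracket_mem hik hjk.symm hij hY hWk),
      S.projm_of_h (S.bracket_h j Zj hZj _ hWj),
      S.projm_of_h (S.bracket_h k Zk hZk _ hWk),
      S.projm_of_mem (S.bracket_mem hjk hik.symm hij.symm hZj hWk),
      S.projm_of_mem (S.bracket_mem hjk.symm hij.symm hik.symm hZk hWj)]
    abel
  have hUXW := S.U_formula hij hjk hik a (Y + Zj + Zk) (f (Zj + Zk))
  rw [hpiX, hpjX, hpkX, hWi] at hUXW
  have hUXX := S.U_formula hij hjk hik a (Y + Zj + Zk) (Y + Zj + Zk)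
  rw [hpiX, hpjX, hpkX] at hUXX
  have hfUXX : f (S.U a (Y + Zj + Zk) (Y + Zj + Zk))
      = (2 * ((a k - a i) / (2 * a j))) • f ⁅Y, Zk⁆
        + (2 * ((a j - a i) / (2 * a k))) • f ⁅Y, Zj⁆ := by
    rw [hUXX]
    have hzjk : f ⁅Zj, Zk⁆ = 0 :=
      hf_zero _ (S.bracket_mem hjk hik.symm hij.symm hZj hZk)
    simp only [map_add, map_smul, hzjk]
    module
  rw [hfX, hbr, hUXW, hfUXX,
    show ⁅S.p j (f (Zj + Zk)), Zk⁆ = -⁅Zk, S.p j (f (Zj + Zk))⁆ from (lie_skew _ _).symm]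
  simp only [zero_lie, lie_zero, add_zero]
  module


end ThreeModuleSetting

/-- if `f` is an invariant `f`-structure with kernel the single module `mᵢ`
(i.e. `f = 0` on `mᵢ`, `f(mⱼ ⊕ m_k) ⊆ mⱼ ⊕ m_k`, `f² = -id` on `mⱼ ⊕ m_k`), and there is
`X ∈ m` with `[(fX)ⱼ, (f²X)_k] ≠ 0`, then for positive characteristic numbers the Killing
`f`-condition `(1/2)[X, fX]_m + U(X, fX) − f(U(X, X)) = 0` for all `X ∈ m` holds if and
only if `aⱼ = a_k = (3/4)aᵢ` (the kernel module `mᵢ` carries the weight `4`), and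
`[Z, fZ]_m = 0` for all `Z ∈ mⱼ ⊕ m_k`, and `[Y, fZ] + f([Y,Z]) = 0` for all `Y ∈ mᵢ`,
`Z ∈ mⱼ ⊕ m_k`. -/
theorem statement6 {g : Type*} [LieRing g] [LieAlgebra ℝ g] [FiniteDimensional ℝ g]
    (S : ThreeModuleSetting g) (i j k : Fin 3) (hij : i ≠ j) (hjk : j ≠ k) (hik : i ≠ k)
    (f : g →ₗ[ℝ] g)
    (hf_zero : ∀ X ∈ S.m i, f X = 0)
    (hf_inv : ∀ X ∈ S.m j ⊔ S.m k, f X ∈ S.m j ⊔ S.m k)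
    (hf_sq : ∀ X ∈ S.m j ⊔ S.m k, f (f X) = -X)
    (hne : ∃ X ∈ S.msum, ⁅S.p j (f X), S.p k (f (f X))⁆ ≠ 0)
    (a : Fin 3 → ℝ) (ha : ∀ t, 0 < a t) :
    (∀ X ∈ S.msum,
        (1 / 2 : ℝ) • S.projm ⁅X, f X⁆ + S.U a X (f X) - f (S.U a X X) = 0)
    ↔ (a j = a k ∧ a j = (3 / 4 : ℝ) * a i
        ∧ (∀ Z ∈ S.m j ⊔ S.m k, S.projm ⁅Z, f Z⁆ = 0)
        ∧ (∀ Y ∈ S.m i, ∀ Z ∈ S.m j ⊔ S.m k, ⁅Y, f Z⁆ + f ⁅Y, Z⁆ = 0)) := by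
  classical
  have hcsup : ∀ {Zj Zk : g}, Zj ∈ S.m j → Zk ∈ S.m k → Zj + Zk ∈ S.m j ⊔ S.m k :=
    fun hZj hZk => add_mem (Submodule.mem_sup_left hZj) (Submodule.mem_sup_right hZk)
  have hbrmem : ∀ {Y Z : g}, Y ∈ S.m i → Z ∈ S.m j ⊔ S.m k → ⁅Y, Z⁆ ∈ S.m j ⊔ S.m k := by
    intro Y Z hY hZ
    obtain ⟨Zj, hZj, Zk, hZk, rfl⟩ := Submodule.mem_sup.1 hZ
    rw [lie_add]
    exact add_mem (Submodule.mem_sup_right (S.bracket_mem hij hjk hik hY hZj))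
      (Submodule.mem_sup_left (S.bracket_mem hik hjk.symm hij hY hZk))
  constructor
  · intro H
    have hEi : ∀ {Zj Zk : g}, Zj ∈ S.m j → Zk ∈ S.m k →
        (1 / 2 : ℝ) • (⁅Zj, S.p k (f (Zj + Zk))⁆ + ⁅Zk, S.p j (f (Zj + Zk))⁆)
          + ((a k - a j) / (2 * a i)) •
            (⁅Zj, S.p k (f (Zj + Zk))⁆ - ⁅Zk, S.p j (f (Zj + Zk))⁆) = 0 := by
      intro Zj Zk hZj hZk
      have h0 := H (0 + Zj + Zk)
        (add_mem (add_mem (S.m_le_msum i (zero_mem _)) (S.m_le_msum j hZj))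
          (S.m_le_msum k hZk))
      rw [S.C_formula hij hjk hik f hf_zero hf_inv a (zero_mem _) hZj hZk] at h0
      simpa using h0
    have hsum : ∀ {Zj Zk : g}, Zj ∈ S.m j → Zk ∈ S.m k →
        ⁅Zj, S.p k (f (Zj + Zk))⁆ + ⁅Zk, S.p j (f (Zj + Zk))⁆ = 0 := by
      intro Zj Zk hZj hZk
      have h1 := hEi hZj hZk
      have hZsup := hcsup hZj hZk
      obtain ⟨hWsum, -⟩ := S.sup_decomp hjk (hf_inv _ hZsup)
      have hWj := S.p_mem j (f (Zj + Zk))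
      have hWk := S.p_mem k (f (Zj + Zk))
      have h2 := hEi hWj hWk
      have hfW : f (S.p j (f (Zj + Zk)) + S.p k (f (Zj + Zk))) = -(Zj + Zk) := by
        rw [hWsum]; exact hf_sq _ hZsup
      rw [hfW] at h2
      have hk' : S.p k (-(Zj + Zk)) = -Zk := by
        rw [map_neg, map_add, S.p_other hZj hjk.symm, S.p_same hZk, zero_add]
      have hj' : S.p j (-(Zj + Zk)) = -Zj := by
        rw [map_neg, map_add, S.p_same hZj, S.p_other hZk hjk, add_zero]
      rw [hk', hj', ThreeModuleSetting.lie_neg_swap, ThreeModuleSetting.lie_neg_swap] at h2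
      linear_combination (norm := module) h1 + h2
    obtain ⟨X0, hX0, hX0ne⟩ := hne
    have hZj0 := S.p_mem j X0
    have hZk0 := S.p_mem k X0
    have hfX0 : f X0 = f (S.p j X0 + S.p k X0) := by
      conv_lhs => rw [← S.msum_decomp' hij hjk hik hX0]
      rw [map_add, map_add, hf_zero _ (S.p_mem i X0), zero_add, ← map_add]
    rw [hfX0, hf_sq _ (hcsup hZj0 hZk0)] at hX0ne
    have hk' : S.p k (-(S.p j X0 + S.p k X0)) = -(S.p k X0) := by
      rw [map_neg, map_add, S.p_other hZj0 hjk.symm, S.p_same hZk0, zero_add]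
    rw [hk', ThreeModuleSetting.lie_neg_swap] at hX0ne
    have h1 := hEi hZj0 hZk0
    have h2 := hsum hZj0 hZk0
    have h5 : (-(2 * ((a k - a j) / (2 * a i)))) •
        ⁅S.p k X0, S.p j (f (S.p j X0 + S.p k X0))⁆ = 0 := by
      linear_combination (norm := module)
        h1 + (-(1 / 2 : ℝ) - (a k - a j) / (2 * a i)) • h2
    have hajk : a j = a k := by
      rcases smul_eq_zero.1 h5 with h | h
      · have h6 : (a k - a j) / (2 * a i) = 0 := by linarith
        rcases div_eq_zero_iff.1 h6 with h7 | h7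
        · linarith
        · nlinarith [ha i]
      · exact absurd h hX0ne
    have hstar : ∀ Y ∈ S.m i, ∀ Z ∈ S.m j ⊔ S.m k,
        ((1 / 2 : ℝ) + (a j - a i) / (2 * a j)) • ⁅Y, f Z⁆
          = (2 * ((a j - a i) / (2 * a j))) • f ⁅Y, Z⁆ := by
      intro Y hY Z hZ
      obtain ⟨Zj, hZj, Zk, hZk, rfl⟩ := Submodule.mem_sup.1 hZ
      have h0 := H (Y + Zj + Zk)
        (add_mem (add_mem (S.m_le_msum i hY) (S.m_le_msum j hZj)) (S.m_le_msum k hZk))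
      rw [S.C_formula hij hjk hik f hf_zero hf_inv a hY hZj hZk] at h0
      rw [← hajk] at h0
      rw [hsum hZj hZk] at h0
      obtain ⟨hWsum, -⟩ := S.sup_decomp hjk (hf_inv _ (hcsup hZj hZk))
      have hY1 : ⁅Y, f (Zj + Zk)⁆
          = ⁅Y, S.p j (f (Zj + Zk))⁆ + ⁅Y, S.p k (f (Zj + Zk))⁆ := by
        conv_lhs => rw [← hWsum]
        rw [lie_add]
      have hY2 : f ⁅Y, Zj + Zk⁆ = f ⁅Y, Zj⁆ + f ⁅Y, Zk⁆ := by rw [lie_add, map_add]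
      rw [hY1, hY2]
      linear_combination (norm := module) h0
    obtain ⟨Y0, hY0, Z0, hZ0, hbne⟩ := S.bracket_ne i
    have hio : i + 1 = j ∨ i + 1 = k := by
      have hall : ∀ i' j' k' : Fin 3, i' ≠ j' → j' ≠ k' → i' ≠ k' →
          (i' + 1 = j' ∨ i' + 1 = k') := by decide
      exact hall i j k hij hjk hik
    have hZ0sup : Z0 ∈ S.m j ⊔ S.m k := by
      rcases hio with h | h
      · exact Submodule.mem_sup_left (h ▸ hZ0)
      · exact Submodule.mem_sup_right (h ▸ hZ0)
    have e1 := hstar Y0 hY0 Z0 hZ0sup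
    have e2 := hstar Y0 hY0 (f Z0) (hf_inv _ hZ0sup)
    rw [hf_sq _ hZ0sup, lie_neg] at e2
    have e3 := congrArg f e1
    simp only [map_smul] at e3
    rw [hf_sq _ (hbrmem hY0 hZ0sup)] at e3
    have e4 : (((1 / 2 : ℝ) + (a j - a i) / (2 * a j)) ^ 2
        - (2 * ((a j - a i) / (2 * a j))) ^ 2) • ⁅Y0, Z0⁆ = 0 := by
      linear_combination (norm := module)
        (-((1 / 2 : ℝ) + (a j - a i) / (2 * a j))) • e2
          - (2 * ((a j - a i) / (2 * a j))) • e3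
    have hsc : ((1 / 2 : ℝ) + (a j - a i) / (2 * a j)) ^ 2
        - (2 * ((a j - a i) / (2 * a j))) ^ 2 = 0 := by
      rcases smul_eq_zero.1 e4 with h | h
      · exact h
      · exact absurd h hbne
    have haj := ha j
    have hai := ha i
    have hajne : a j ≠ 0 := ne_of_gt haj
    have hfac : ((a j - a i) / (2 * a j) - 1 / 2) * ((a j - a i) / (2 * a j) + 1 / 6) = 0 := by
      linear_combination (-(1 / 3 : ℝ)) * hsc
    have h2aj : (2 : ℝ) * a j ≠ 0 := ne_of_gt (by linarith)
    have hβval : (a j - a i) / (2 * a j) = -(1 / 6 : ℝ) := by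
      rcases mul_eq_zero.1 hfac with h | h
      · exfalso
        have h' : (a j - a i) / (2 * a j) = 1 / 2 := by linarith
        rw [div_eq_iff h2aj] at h'
        linarith
      · linarith
    have h34 : a j = (3 / 4 : ℝ) * a i := by
      have hβval' := hβval
      rw [div_eq_iff h2aj] at hβval'
      linarith
    refine ⟨hajk, h34, ?_, ?_⟩
    · intro Z hZ
      obtain ⟨Zj, hZj, Zk, hZk, rfl⟩ := Submodule.mem_sup.1 hZ
      rw [S.projm_bracket hij hjk hik f hf_inv hZj hZk]
      exact hsum hZj hZk
    · intro Y hY Z hZ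
      have h := hstar Y hY Z hZ
      rw [hβval] at h
      have h3 : ((1 : ℝ) / 3) • (⁅Y, f Z⁆ + f ⁅Y, Z⁆) = 0 := by
        linear_combination (norm := module) h
      rcases smul_eq_zero.1 h3 with h' | h'
      · norm_num at h'
      · exact h'
  · rintro ⟨h1, h2, h3, h4⟩ X hX
    have hY := S.p_mem i X
    have hZj := S.p_mem j X
    have hZk := S.p_mem k X
    rw [← S.msum_decomp' hij hjk hik hX,
      S.C_formula hij hjk hik f hf_zero hf_inv a hY hZj hZk]
    have hAB := h3 (S.p j X + S.p k X) (hcsup hZj hZk)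
    rw [S.projm_bracket hij hjk hik f hf_inv hZj hZk] at hAB
    have h4' := h4 (S.p i X) hY (S.p j X + S.p k X) (hcsup hZj hZk)
    obtain ⟨hWsum, -⟩ := S.sup_decomp hjk (hf_inv _ (hcsup hZj hZk))
    have hY1 : ⁅S.p i X, f (S.p j X + S.p k X)⁆
        = ⁅S.p i X, S.p j (f (S.p j X + S.p k X))⁆
          + ⁅S.p i X, S.p k (f (S.p j X + S.p k X))⁆ := by
      conv_lhs => rw [← hWsum]
      rw [lie_add]
    rw [hY1, lie_add,
      map_add f ⁅S.p i X, S.p j X⁆ ⁅S.p i X, S.p k X⁆] at h4'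
    have hk2 : a k = a j := h1.symm
    rw [hk2, hAB]
    have hai : a i ≠ 0 := ne_of_gt (ha i)
    have hβ : (a j - a i) / (2 * a j) = -(1 / 6 : ℝ) := by
      rw [h2, div_eq_iff (ne_of_gt (by linarith [ha i] : (0 : ℝ) < 2 * ((3 / 4 : ℝ) * a i)))]
      ring
    rw [hβ]
    linear_combination (norm := module) ((1 : ℝ) / 3) • h4'
end

section
/- For every Y ∈ m₁ and every Z ∈ m₂ ⊕ m₃ one has [Y, f₄Z] + f₄([Y, Z]) = 0 (note that [Y,Z] ∈ m₂ ⊕ m₃ by the bracket relations [m₁,m₂] ⊆ m₃ and [m₁,m₃] ⊆ m₂, so f₄([Y,Z]) is defined). -/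
namespace SO4

/-- The matrix `E_{pq}` with `1` in position `(p,q)` and `0` elsewhere (indices `0,…,3`
correspond to the paper's `1,…,4`). -/
def E (p q : Fin 4) : Matrix (Fin 4) (Fin 4) ℝ := Matrix.single p q 1

/-- The element of `m` with coordinates `(a, b₁, b₂, c₁, c₂)`. -/
noncomputable def M (a b1 b2 c1 c2 : ℝ) : Matrix (Fin 4) (Fin 4) ℝ :=
  a • (E 0 1 - E 1 0) + b1 • (E 0 2 - E 2 0) + b2 • (E 0 3 - E 3 0) +
    c1 • (E 1 2 - E 2 1) + c2 • (E 1 3 - E 3 1)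

/-- `h = span{E₃₄ − E₄₃}`, the embedded `so(2)`. -/
def hsub : Submodule ℝ (Matrix (Fin 4) (Fin 4) ℝ) := Submodule.span ℝ {E 2 3 - E 3 2}

/-- `m₁ = span{E₁₂ − E₂₁}`. -/
def m1 : Submodule ℝ (Matrix (Fin 4) (Fin 4) ℝ) := Submodule.span ℝ {E 0 1 - E 1 0}

/-- `m₂ = span{E₁₃ − E₃₁, E₁₄ − E₄₁}`. -/
def m2 : Submodule ℝ (Matrix (Fin 4) (Fin 4) ℝ) :=
  Submodule.span ℝ {E 0 2 - E 2 0, E 0 3 - E 3 0}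

/-- `m₃ = span{E₂₃ − E₃₂, E₂₄ − E₄₂}`. -/
def m3 : Submodule ℝ (Matrix (Fin 4) (Fin 4) ℝ) :=
  Submodule.span ℝ {E 1 2 - E 2 1, E 1 3 - E 3 1}

/-- `m = m₁ ⊕ m₂ ⊕ m₃`. -/
def msum : Submodule ℝ (Matrix (Fin 4) (Fin 4) ℝ) := m1 ⊔ m2 ⊔ m3

/-- The projection of `X ∈ so(4)` onto `m` along `h` (read off the coordinates
`a = X₁₂, b₁ = X₁₃, b₂ = X₁₄, c₁ = X₂₃, c₂ = X₂₄`). -/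
noncomputable def projm (X : Matrix (Fin 4) (Fin 4) ℝ) : Matrix (Fin 4) (Fin 4) ℝ :=
  M (X 0 1) (X 0 2) (X 0 3) (X 1 2) (X 1 3)

/-- The `m₁`-component of `X ∈ m`. -/
noncomputable def P1 (X : Matrix (Fin 4) (Fin 4) ℝ) : Matrix (Fin 4) (Fin 4) ℝ :=
  M (X 0 1) 0 0 0 0

/-- The `m₂`-component of `X ∈ m`. -/
noncomputable def P2 (X : Matrix (Fin 4) (Fin 4) ℝ) : Matrix (Fin 4) (Fin 4) ℝ :=
  M 0 (X 0 2) (X 0 3) 0 0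

/-- The `m₃`-component of `X ∈ m`. -/
noncomputable def P3 (X : Matrix (Fin 4) (Fin 4) ℝ) : Matrix (Fin 4) (Fin 4) ℝ :=
  M 0 0 0 (X 1 2) (X 1 3)

/-- `f₁(a,b₁,b₂,c₁,c₂) = (0, b₂, −b₁, 0, 0)`, acting on `m`. -/
noncomputable def f1 (X : Matrix (Fin 4) (Fin 4) ℝ) : Matrix (Fin 4) (Fin 4) ℝ :=
  M 0 (X 0 3) (-(X 0 2)) 0 0

/-- `f₂(a,b₁,b₂,c₁,c₂) = (0, 0, 0, c₂, −c₁)`, acting on `m`. -/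
noncomputable def f2 (X : Matrix (Fin 4) (Fin 4) ℝ) : Matrix (Fin 4) (Fin 4) ℝ :=
  M 0 0 0 (X 1 3) (-(X 1 2))

/-- `f₃(a,b₁,b₂,c₁,c₂) = (0, b₂, −b₁, c₂, −c₁)`, acting on `m`. -/
noncomputable def f3 (X : Matrix (Fin 4) (Fin 4) ℝ) : Matrix (Fin 4) (Fin 4) ℝ :=
  M 0 (X 0 3) (-(X 0 2)) (X 1 3) (-(X 1 2))

/-- `f₄(a,b₁,b₂,c₁,c₂) = (0, b₂, −b₁, −c₂, c₁)`, acting on `m`. -/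
noncomputable def f4 (X : Matrix (Fin 4) (Fin 4) ℝ) : Matrix (Fin 4) (Fin 4) ℝ :=
  M 0 (X 0 3) (-(X 0 2)) (-(X 1 3)) (X 1 2)

end SO4

/-! On `m₂ ⊕ m₃ ≅ ℝ² × ℝ²`, bracketing with `Y = a (E₁₂ − E₂₁)` acts as `(b, c) ↦ a (c, −b)`, while
`f₄` acts as `(b, c) ↦ (J b, −J c)` with `J (x, y) = (y, −x)`. These two maps anticommute. -/

namespace SO4

theorem M_eq_matrix (a b1 b2 c1 c2 : ℝ) :
    M a b1 b2 c1 c2 = !![0, a, b1, b2; -a, 0, c1, c2; -b1, -c1, 0, 0; -b2, -c2, 0, 0] := by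
  ext i j
  fin_cases i <;> fin_cases j <;> simp [M, E, Matrix.single]

theorem neg_M (a b1 b2 c1 c2 : ℝ) : -M a b1 b2 c1 c2 = M (-a) (-b1) (-b2) (-c1) (-c2) := by
  simp only [M, neg_smul, neg_add]

theorem mem_m1_iff {Y : Matrix (Fin 4) (Fin 4) ℝ} : Y ∈ m1 ↔ ∃ a, M a 0 0 0 0 = Y := by
  simp [m1, Submodule.mem_span_singleton, M]

theorem mem_m2_sup_m3_iff {Z : Matrix (Fin 4) (Fin 4) ℝ} :
    Z ∈ m2 ⊔ m3 ↔ ∃ b1 b2 c1 c2, M 0 b1 b2 c1 c2 = Z := by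
  simp only [Submodule.mem_sup, m2, m3, Submodule.mem_span_pair, M, zero_smul, zero_add]
  constructor
  · rintro ⟨_, ⟨b1, b2, rfl⟩, _, ⟨c1, c2, rfl⟩, rfl⟩
    exact ⟨b1, b2, c1, c2, by abel⟩
  · rintro ⟨b1, b2, c1, c2, rfl⟩
    exact ⟨_, ⟨b1, b2, rfl⟩, _, ⟨c1, c2, rfl⟩, by abel⟩

theorem f4_M (a b1 b2 c1 c2 : ℝ) : f4 (M a b1 b2 c1 c2) = M 0 b2 (-b1) (-c2) c1 := by
  simp [f4, M_eq_matrix]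

theorem lie_M_m1_m2_sup_m3 (a b1 b2 c1 c2 : ℝ) :
    ⁅M a 0 0 0 0, M 0 b1 b2 c1 c2⁆ = M 0 (a * c1) (a * c2) (-(a * b1)) (-(a * b2)) := by
  rw [Ring.lie_def]
  simp only [M_eq_matrix]
  ext i j
  fin_cases i <;> fin_cases j <;> simp <;> ring

theorem lie_M_f4_eq_neg_f4_lie (a b1 b2 c1 c2 : ℝ) :
    ⁅M a 0 0 0 0, f4 (M 0 b1 b2 c1 c2)⁆ = -f4 ⁅M a 0 0 0 0, M 0 b1 b2 c1 c2⁆ := by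
  rw [f4_M, lie_M_m1_m2_sup_m3, lie_M_m1_m2_sup_m3, f4_M, neg_M]
  ring_nf

end SO4

open SO4 in
/-- for every `Y ∈ m₁` and every `Z ∈ m₂ ⊕ m₃` one has
`[Y, f₄Z] + f₄([Y, Z]) = 0` (here `[Y,Z] ∈ m₂ ⊕ m₃`, so `f₄([Y,Z])` is defined). -/
theorem statement11 :
    ∀ Y ∈ m1, ∀ Z ∈ m2 ⊔ m3, ⁅Y, f4 Z⁆ + f4 ⁅Y, Z⁆ = 0 := by
  intro Y hY Z hZ
  obtain ⟨a, rfl⟩ := mem_m1_iff.1 hY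
  obtain ⟨b1, b2, c1, c2, rfl⟩ := mem_m2_sup_m3_iff.1 hZ
  rw [lie_M_f4_eq_neg_f4_lie, neg_add_cancel]
end
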